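/- arXiv:1109.1064 — 2 statements merged into one kernel-verified Lean document; each statement's English description precedes it below -/
import Mathlib

section
/- A semigroup X is inverse if and only if the image of X under the embedding x ↦ ⟨x⟩ lies in some inverse subsemigroup S of the semigroup υ(X). -/
open Set

/-- An *upfamily* on `X`: a nonempty family of nonempty subsets of `X`
that is closed under taking supersets. -/
def IsUpfamily {X : Type*} (F : Set (Set X)) : Prop :=
  F.Nonempty ∧ (∀ A ∈ F, A.Nonempty) ∧ ∀ A ∈ F, ∀ B : Set X, A ⊆ B → B ∈ F

/-- The space `υ(X)` of upfamilies on `X`. -/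
def Upfamily (X : Type*) : Type _ := {F : Set (Set X) // IsUpfamily F}

/-- The extension of the binary operation of `X` to families of subsets of `X`:
`𝓐*𝓑 = ⟨⋃_{a ∈ A} a*B_a : A ∈ 𝓐, {B_a}_{a∈A} ⊆ 𝓑⟩`. -/
def upMul {X : Type*} [Mul X] (F G : Set (Set X)) : Set (Set X) :=
  {C | ∃ A ∈ F, ∃ B : X → Set X, (∀ a ∈ A, B a ∈ G) ∧ (⋃ a ∈ A, (fun y => a * y) '' B a) ⊆ C}

theorem IsUpfamily.upMul {X : Type*} [Mul X] {F G : Set (Set X)}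
    (hF : IsUpfamily F) (hG : IsUpfamily G) : IsUpfamily (upMul F G) := by
  obtain ⟨⟨A0, hA0⟩, hFne, hFup⟩ := hF
  obtain ⟨⟨B0, hB0⟩, hGne, hGup⟩ := hG
  refine ⟨⟨univ, A0, hA0, fun _ => B0, fun a _ => hB0, subset_univ _⟩, ?_, ?_⟩
  · rintro C ⟨A, hA, B, hB, hsub⟩
    obtain ⟨a, ha⟩ := hFne A hA
    obtain ⟨b, hb⟩ := hGne (B a) (hB a ha)
    exact ⟨a * b, hsub (mem_biUnion ha ⟨b, hb, rfl⟩)⟩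
  · rintro C ⟨A, hA, B, hB, hsub⟩ D hCD
    exact ⟨A, hA, B, hB, hsub.trans hCD⟩

/-- `υ(X)` is a semigroup under the extended operation. -/
instance {X : Type*} [Mul X] : Mul (Upfamily X) :=
  ⟨fun F G => ⟨upMul F.1 G.1, F.2.upMul G.2⟩⟩

/-- The embedding `X → υ(X)`, `x ↦ ⟨x⟩ = {A ⊆ X : x ∈ A}`. -/
def Upfamily.principal {X : Type*} (x : X) : Upfamily X :=
  ⟨{A | x ∈ A}, ⟨univ, mem_univ x⟩, fun A hA => ⟨x, hA⟩, fun _ hA _ hAB => hAB hA⟩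

/-- An upfamily is linked if any two of its members intersect. -/
def Upfamily.Linked {X : Type*} (F : Upfamily X) : Prop :=
  ∀ A ∈ F.1, ∀ B ∈ F.1, (A ∩ B).Nonempty

/-- Maximal linked upfamilies. -/
def Upfamily.IsMaxLinked {X : Type*} (F : Upfamily X) : Prop :=
  F.Linked ∧ ∀ G : Upfamily X, G.Linked → F.1 ⊆ G.1 → F = G

/-- Filters: upfamilies closed under binary intersections. -/
def Upfamily.IsFilter {X : Type*} (F : Upfamily X) : Prop :=
  ∀ A ∈ F.1, ∀ B ∈ F.1, A ∩ B ∈ F.1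

/-- Ultrafilters: maximal filters. -/
def Upfamily.IsUltrafilter {X : Type*} (F : Upfamily X) : Prop :=
  F.IsFilter ∧ ∀ G : Upfamily X, G.IsFilter → F.1 ⊆ G.1 → F = G

/-- The superextension `λ(X)` of maximal linked upfamilies. -/
def lambdaS (X : Type*) : Set (Upfamily X) := {F | F.IsMaxLinked}

/-- The semigroup `N₂(X)` of linked upfamilies. -/
def N2S (X : Type*) : Set (Upfamily X) := {F | F.Linked}

/-- The semigroup `φ(X)` of filters. -/
def phiS (X : Type*) : Set (Upfamily X) := {F | F.IsFilter}

/-- The Stone-Čech extension `β(X)` of ultrafilters. -/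
def betaS (X : Type*) : Set (Upfamily X) := {F | F.IsUltrafilter}

section SemigroupProps

variable {M : Type*} [Mul M]

/-- A subset closed under multiplication (i.e. a subsemigroup). -/
def mulClosed (S : Set M) : Prop := ∀ a ∈ S, ∀ b ∈ S, a * b ∈ S

/-- The operation is commutative on `S`. -/
def commOn (S : Set M) : Prop := ∀ a ∈ S, ∀ b ∈ S, a * b = b * a

/-- The idempotents of `S` commute. -/
def idemCommOn (S : Set M) : Prop :=
  ∀ a ∈ S, ∀ b ∈ S, a * a = a → b * b = b → a * b = b * a

/-- `S` is an inverse semigroup: every element has a unique inverse in `S`. -/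
def inverseOn (S : Set M) : Prop :=
  ∀ a ∈ S, ∃! b, b ∈ S ∧ a * b * a = a ∧ b * a * b = b

/-- `H` is a subgroup of the ambient multiplicative structure:
it is closed under multiplication and carries a group structure. -/
def IsSubgroupIn (H : Set M) : Prop :=
  (∀ a ∈ H, ∀ b ∈ H, a * b ∈ H) ∧
    ∃ e ∈ H, (∀ a ∈ H, e * a = a ∧ a * e = a) ∧ ∀ a ∈ H, ∃ b ∈ H, a * b = e ∧ b * a = e

/-- `S` is a Clifford semigroup: a union of groups. -/
def cliffordOn (S : Set M) : Prop := ∀ a ∈ S, ∃ H ⊆ S, IsSubgroupIn H ∧ a ∈ H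

/-- `S` is regular in `T`: every `a ∈ S` satisfies `a ∈ a T a`. -/
def regularIn (S T : Set M) : Prop := ∀ a ∈ S, ∃ b ∈ T, a * b * a = a

/-- `ppow a n = a^(n+1)`: positive powers in a semigroup. -/
def ppow (a : M) : ℕ → M
  | 0 => a
  | n + 1 => ppow a n * a

/-- `S` is sub-Clifford: `x^{n+1} = x^{m+1}` implies `x^n = x^m` for positive `n < m`. -/
def subCliffordOn (S : Set M) : Prop :=
  ∀ a ∈ S, ∀ n m : ℕ, n < m → ppow a (n + 1) = ppow a (m + 1) → ppow a n = ppow a m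

end SemigroupProps

/-- The cyclic group `Cₙ` of order `n`. -/
abbrev Cgrp (n : ℕ) : Type := Multiplicative (ZMod n)

/-- The linear semilattice `Lₙ = {0,…,n-1}` with the operation of minimum. -/
def L (n : ℕ) : Type := Fin n

instance {n : ℕ} : Mul (L n) :=
  ⟨fun a b => show Fin n from min (show Fin n from a) (show Fin n from b)⟩

/-- The disjoint ordered union `X ⊔ Y` of two semigroups, in which
`x * y = y * x = x` for `x ∈ X` and `y ∈ Y`. -/
abbrev OSum (A B : Type*) : Type _ := A ⊕ B

instance {A B : Type*} [Mul A] [Mul B] : Mul (OSum A B) :=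
  ⟨fun x y =>
    match x, y with
    | Sum.inl a, Sum.inl a' => Sum.inl (a * a')
    | Sum.inl a, Sum.inr _ => Sum.inl a
    | Sum.inr _, Sum.inl a => Sum.inl a
    | Sum.inr b, Sum.inr b' => Sum.inr (b * b')⟩

/-- `M` is isomorphic to the sub-semigroup `S` of `N`: there is an injective
operation-preserving map of `M` onto `S`. -/
def MulIsoOnto (M : Type*) [Mul M] {N : Type*} [Mul N] (S : Set N) : Prop :=
  ∃ f : M → N, Function.Injective f ∧ Set.range f = S ∧ ∀ x y : M, f (x * y) = f x * f y


/-!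
Principal upfamilies multiply like the points of `X`, and `x ↦ ⟨x⟩` is injective, so `y` is an
inverse of `x` in `X` exactly when `⟨y⟩` is an inverse of `⟨x⟩` in `υ(X)`. This transfers
existence of inverses from `X` to the image of `X`, and uniqueness from any inverse subsemigroup
containing that image back to `X`. The remaining point is existence of inverses in `X` when
`⟨x⟩ * 𝓑 * ⟨x⟩ = ⟨x⟩` only for some upfamily `𝓑`: unwinding `{x} ∈ ⟨x⟩ * 𝓑 * ⟨x⟩` produces
`b ∈ X` with `x b x = x`, and then `b x b` is an inverse of `x`.
-/

section MutualInverse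

variable {M N : Type*} [Mul M] [Mul N]

def IsMutualInverse (x y : M) : Prop := x * y * x = x ∧ y * x * y = y

theorem isMutualInverse_mul_mul_of_mul_mul_eq {T : Type*} [Semigroup T] {x b : T}
    (h : x * b * x = x) : IsMutualInverse x (b * x * b) := by
  have hbx : b * x * (b * x) = b * x := by rw [mul_assoc b x, ← mul_assoc x b x, h]
  constructor
  · rw [← mul_assoc, ← mul_assoc, h, h]
  · rw [mul_assoc (b * x) b x, hbx, ← mul_assoc, hbx]

theorem MulHom.isMutualInverse_map_iff {f : M →ₙ* N} (hf : Function.Injective f) {x y : M} :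
    IsMutualInverse (f x) (f y) ↔ IsMutualInverse x y := by
  simp only [IsMutualInverse, ← map_mul, hf.eq_iff]

theorem MulHom.inverseOn_range {f : M →ₙ* N} (hf : Function.Injective f)
    (h : ∀ x : M, ∃! y, IsMutualInverse x y) : inverseOn (range f) := by
  rintro _ ⟨x, rfl⟩
  obtain ⟨y, hy, hy_unique⟩ := h x
  refine ⟨f y, ⟨mem_range_self y, (isMutualInverse_map_iff hf).2 hy⟩, ?_⟩
  rintro _ ⟨⟨y', rfl⟩, hy'⟩
  rw [hy_unique y' ((isMutualInverse_map_iff hf).1 hy')]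

theorem MulHom.existsUnique_isMutualInverse {f : M →ₙ* N} (hf : Function.Injective f)
    {S : Set N} (hS : inverseOn S) (hfS : ∀ x, f x ∈ S) {x y : M} (hxy : IsMutualInverse x y) :
    ∃! y, IsMutualInverse x y := by
  refine ⟨y, hxy, fun y' hxy' => hf ?_⟩
  obtain ⟨_, _, h_unique⟩ := hS (f x) (hfS x)
  exact (h_unique _ ⟨hfS y', (isMutualInverse_map_iff hf).2 hxy'⟩).trans
    (h_unique _ ⟨hfS y, (isMutualInverse_map_iff hf).2 hxy⟩).symm

end MutualInverse

namespace Upfamily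

variable {X : Type*}

theorem principal_injective : Function.Injective (principal (X := X)) := by
  intro x y h
  have hx : ({x} : Set X) ∈ (principal y).1 := h ▸ mem_singleton x
  exact (mem_singleton_iff.1 hx).symm

variable [Mul X]

theorem principal_mul_principal (x y : X) : principal x * principal y = principal (x * y) := by
  refine Subtype.ext (Set.ext fun C => ⟨?_, fun hC => ?_⟩)
  · rintro ⟨A, hA, B, hB, hsub⟩
    exact hsub (mem_biUnion hA ⟨y, hB x hA, rfl⟩)
  · refine ⟨{x}, mem_singleton x, fun _ => {y}, fun _ _ => mem_singleton y, ?_⟩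
    simp only [biUnion_singleton, image_singleton, singleton_subset_iff]
    exact hC

def principalMulHom : X →ₙ* Upfamily X where
  toFun := principal
  map_mul' x y := (principal_mul_principal x y).symm

theorem exists_mul_mul_eq_of_principal_mul_mul_eq {x : X} {B : Upfamily X}
    (h : principal x * B * principal x = principal x) : ∃ b, x * b * x = x := by
  have hx : ({x} : Set X) ∈ (principal x * B * principal x).1 := by rw [h]; exact mem_singleton x
  obtain ⟨A, ⟨A', hxA', B', hB', hA⟩, C, hC, hsub⟩ := hx
  obtain ⟨b, hb⟩ := B.2.2.1 _ (hB' x hxA')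
  have hxbA : x * b ∈ A := hA (mem_biUnion hxA' ⟨b, hb, rfl⟩)
  exact ⟨b, hsub (mem_biUnion hxbA ⟨x, hC _ hxbA, rfl⟩)⟩

end Upfamily

/-- Corollary 3.2: a semigroup `X` is inverse if and only if the image of `X`
under `x ↦ ⟨x⟩` lies in some inverse subsemigroup `S ⊆ υ(X)`. -/
theorem inverse_iff_lies_in_inverse_subsemigroup (X : Type*) [Semigroup X] :
    (∀ x : X, ∃! y : X, x * y * x = x ∧ y * x * y = y) ↔
      ∃ S : Set (Upfamily X), mulClosed S ∧ inverseOn S ∧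
        ∀ x : X, Upfamily.principal x ∈ S := by
  let f : X →ₙ* Upfamily X := Upfamily.principalMulHom
  have hf : Function.Injective f := Upfamily.principal_injective
  constructor
  · intro hX
    refine ⟨range f, ?_, f.inverseOn_range hf hX, mem_range_self⟩
    rintro _ ⟨a, rfl⟩ _ ⟨b, rfl⟩
    exact ⟨a * b, map_mul f a b⟩
  · rintro ⟨S, -, hS, hXS⟩ x
    obtain ⟨B, ⟨-, hxBx, -⟩, -⟩ := hS _ (hXS x)
    obtain ⟨b, hb⟩ := Upfamily.exists_mul_mul_eq_of_principal_mul_mul_eq hxBx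
    exact f.existsUnique_isMutualInverse hf hS hXS (isMutualInverse_mul_mul_of_mul_mul_eq hb)
end

section
/- The superextension λ(C₂×C₂) of the group C₂×C₂ is isomorphic to the semigroup (C₂⊔L₁)×C₂×C₂. -/
open Set

/-!
The four-element set `X = C₂ × C₂` carries exactly twelve maximal linked upfamilies, each
generated by sets of size at most three: the principal ultrafilters `⟨{g}⟩`, the stars
`⟨{g, x} (x ≠ g), X ∖ {g}⟩` and the triangles `⟨two-element subsets of X ∖ {g}⟩`. The
principal ones multiply like `X`, the stars and triangles form a group `C₂ × X` whose identity
is the star at `1`, and a principal family times a star or triangle is again a star or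
triangle: this is the multiplication of `(C₂ ⊔ L₁) × C₂ × C₂`.

For upper families `𝓐 * 𝓑 = {C | {a | a⁻¹C ∈ 𝓑} ∈ 𝓐}`, so every identity between generated
families is a finite statement about subsets of `X`, checked by evaluation. A maximal linked
family contains each set or its complement, so it is pinned down by which singletons and which
pairs through `1` it contains, and these witnesses always contain the generators of one of
the twelve.
-/

theorem mem_upMul_iff {X : Type*} [Mul X] {F G : Set (Set X)} (hF : IsUpperSet F)
    (hG : IsUpperSet G) {C : Set X} : C ∈ upMul F G ↔ {a | {y | a * y ∈ C} ∈ G} ∈ F := by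
  constructor
  · rintro ⟨A, hA, B, hB, hBC⟩
    refine hF (fun a ha => hG (fun y hy => ?_) (hB a ha)) hA
    exact hBC (mem_biUnion ha (mem_image_of_mem _ hy))
  · intro hC
    refine ⟨_, hC, fun a => {y | a * y ∈ C}, fun a ha => ha, ?_⟩
    simp only [iUnion_subset_iff, image_subset_iff]
    exact fun a _ y hy => hy

namespace Upfamily

variable {X : Type*} {F : Upfamily X}

theorem IsMaxLinked.mem_of_forall_inter_nonempty (hF : F.IsMaxLinked) {A : Set X}
    (hA : ∀ B ∈ F.1, (A ∩ B).Nonempty) : A ∈ F.1 := by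
  obtain ⟨⟨B₀, hB₀⟩, hne, hup⟩ := F.2
  let G : Upfamily X := ⟨F.1 ∪ {B | A ⊆ B}, ⟨B₀, .inl hB₀⟩,
    fun B hB => hB.elim (hne B) ((hA B₀ hB₀).left.mono),
    fun B hB C hBC => hB.imp (hup B · C hBC) hBC.trans'⟩
  have hG : G.Linked := by
    rintro B (hB | hB) C (hC | hC)
    · exact hF.1 B hB C hC
    · exact (hA B hB).mono fun x hx => ⟨hx.2, hC hx.1⟩
    · exact (hA C hC).mono fun x hx => ⟨hB hx.1, hx.2⟩
    · exact (hA B₀ hB₀).left.mono fun x hx => ⟨hB hx, hC hx⟩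
  rw [hF.2 G hG subset_union_left]
  exact .inr (subset_refl A)

theorem IsMaxLinked.mem_or_compl_mem (hF : F.IsMaxLinked) (A : Set X) :
    A ∈ F.1 ∨ Aᶜ ∈ F.1 := by
  by_cases hA : ∀ B ∈ F.1, (A ∩ B).Nonempty
  · exact .inl (hF.mem_of_forall_inter_nonempty hA)
  push Not at hA
  obtain ⟨B, hB, hAB⟩ := hA
  exact .inr (F.2.2.2 B hB _ fun x hx hxA => hAB.subset ⟨hxA, hx⟩)

theorem IsMaxLinked.coe_ite_mem [Fintype X] [DecidableEq X] (hF : F.IsMaxLinked)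
    (t : Finset X) {b : Prop} [Decidable b] (hb : b ↔ (t : Set X) ∈ F.1) :
    ((if b then t else tᶜ : Finset X) : Set X) ∈ F.1 := by
  split_ifs with h
  · exact hb.mp h
  · rw [Finset.coe_compl]
    exact (hF.mem_or_compl_mem _).resolve_left (hb.not.mp h)

theorem isMaxLinked_of_mem_or_compl_mem (hF : F.Linked) (h : ∀ A, A ∈ F.1 ∨ Aᶜ ∈ F.1) :
    F.IsMaxLinked := by
  refine ⟨hF, fun G hG hFG => Subtype.ext (subset_antisymm hFG fun A hA => ?_)⟩
  refine (h A).resolve_right fun hAc => ?_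
  obtain ⟨x, hx, hxc⟩ := hG A hA Aᶜ (hFG hAc)
  exact hxc hx

end Upfamily

section UpClosure

variable {X : Type*}

/-- The paper's `⟨S⟩` for a finite family `S` of finite sets. -/
def upClosure (S : Finset (Finset X)) : Set (Set X) := {A | ∃ s ∈ S, (s : Set X) ⊆ A}

theorem coe_mem_upClosure {S : Finset (Finset X)} {C : Finset X} :
    (C : Set X) ∈ upClosure S ↔ ∃ s ∈ S, s ⊆ C :=
  exists_congr fun _ => and_congr_right fun _ => Finset.coe_subset

theorem isUpperSet_upClosure (S : Finset (Finset X)) : IsUpperSet (upClosure S) :=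
  fun _ _ hAB ⟨s, hs, hsA⟩ => ⟨s, hs, hsA.trans hAB⟩

theorem isUpfamily_upClosure {S : Finset (Finset X)} (hS : S.Nonempty)
    (hne : ∀ s ∈ S, s.Nonempty) : IsUpfamily (upClosure S) := by
  obtain ⟨s, hs⟩ := hS
  refine ⟨⟨s, s, hs, subset_rfl⟩, ?_, fun A hA B hAB => isUpperSet_upClosure S hAB hA⟩
  rintro A ⟨t, ht, htA⟩
  exact (Finset.coe_nonempty.mpr (hne t ht)).mono htA

theorem mem_upMul_upClosure_iff [Mul X] {S T : Finset (Finset X)} {C : Set X} :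
    C ∈ upMul (upClosure S) (upClosure T) ↔
      ∃ s ∈ S, ∀ a ∈ s, ∃ t ∈ T, ∀ y ∈ t, a * y ∈ C :=
  mem_upMul_iff (isUpperSet_upClosure S) (isUpperSet_upClosure T)

theorem Set.Intersecting.upClosure [DecidableEq X] {S : Finset (Finset X)}
    (hS : (S : Set (Finset X)).Intersecting) :
    ∀ A ∈ upClosure S, ∀ B ∈ upClosure S, (A ∩ B).Nonempty := by
  rintro A ⟨s, hs, hsA⟩ B ⟨t, ht, htB⟩
  obtain ⟨x, hx⟩ := Finset.not_disjoint_iff_nonempty_inter.mp (hS hs ht)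
  rw [Finset.mem_inter] at hx
  exact ⟨x, hsA hx.1, htB hx.2⟩

end UpClosure

abbrev Klein : Type := Cgrp 2 × Cgrp 2

instance : Fintype (L 1) := inferInstanceAs (Fintype (Fin 1))

instance : DecidableEq (L 1) := inferInstanceAs (DecidableEq (Fin 1))

namespace Klein

open Finset

abbrev Index : Type := OSum (Cgrp 2) (L 1) × Klein

def starGens (g : Klein) : Finset (Finset Klein) :=
  insert (univ.erase g) ((univ.erase g).image fun x => {g, x})

def triangleGens (g : Klein) : Finset (Finset Klein) := (univ.erase g).powersetCard 2

def gens : Index → Finset (Finset Klein)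
  | (.inr _, g) => {{g}}
  | (.inl c, g) => if c = 1 then starGens g else triangleGens g

def witnesses (S P : Finset Klein) : Finset (Finset Klein) :=
  univ.image (fun g => if g ∈ S then {g} else {g}ᶜ) ∪
    univ.image (fun x => if x ∈ P then {1, x} else {1, x}ᶜ)

set_option synthInstance.maxSize 1000

theorem gens_nonempty : ∀ p, (gens p).Nonempty ∧ ∀ s ∈ gens p, s.Nonempty := by
  decide +kernel

theorem gens_intersecting : ∀ p, ∀ s ∈ gens p, ∀ t ∈ gens p, ¬Disjoint s t := by
  decide +kernel

theorem gens_subset_or_subset_compl :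
    ∀ p (C : Finset Klein), (∃ s ∈ gens p, s ⊆ C) ∨ ∃ s ∈ gens p, s ⊆ Cᶜ := by
  decide +kernel

theorem gens_injective : ∀ p q, (∀ s ∈ gens p, ∃ t ∈ gens q, t ⊆ s) → p = q := by
  decide +kernel

theorem gens_mul : ∀ p q (C : Finset Klein),
    (∃ u ∈ gens (p * q), u ⊆ C) ↔
      ∃ s ∈ gens p, ∀ a ∈ s, ∃ t ∈ gens q, ∀ y ∈ t, a * y ∈ C := by
  decide +kernel

theorem exists_gens_subset_witnesses : ∀ S P : Finset Klein,
    (∀ s ∈ witnesses S P, ∀ t ∈ witnesses S P, ¬Disjoint s t) →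
      ∃ p, ∀ s ∈ gens p, ∃ t ∈ witnesses S P, t ⊆ s := by
  decide +kernel

def family (p : Index) : Upfamily Klein :=
  ⟨upClosure (gens p), isUpfamily_upClosure (gens_nonempty p).1 (gens_nonempty p).2⟩

theorem family_isMaxLinked (p : Index) : (family p).IsMaxLinked := by
  refine Upfamily.isMaxLinked_of_mem_or_compl_mem
    (Set.Intersecting.upClosure (gens_intersecting p)) fun A => ?_
  obtain ⟨C, rfl⟩ := A.toFinite.exists_finset_coe
  rw [← Finset.coe_compl]
  exact (gens_subset_or_subset_compl p C).imp coe_mem_upClosure.mpr coe_mem_upClosure.mpr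

theorem family_eq_of_gens_mem {F : Upfamily Klein} (hF : F.Linked) (p : Index)
    (h : ∀ s ∈ gens p, (s : Set Klein) ∈ F.1) : family p = F :=
  (family_isMaxLinked p).2 F hF fun _ ⟨s, hs, hsA⟩ => F.2.2.2 _ (h s hs) _ hsA

theorem family_injective : Function.Injective family := fun p q h =>
  gens_injective p q fun s hs =>
    coe_mem_upClosure.mp (h ▸ ⟨s, hs, subset_rfl⟩ : (s : Set Klein) ∈ (family q).1)

theorem family_mul (p q : Index) : family (p * q) = family p * family q := by
  refine Subtype.ext (Set.ext fun A => ?_)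
  obtain ⟨C, rfl⟩ := A.toFinite.exists_finset_coe
  exact coe_mem_upClosure.trans ((gens_mul p q C).trans mem_upMul_upClosure_iff.symm)

theorem range_family : range family = lambdaS Klein := by
  refine Set.ext fun F => ⟨by rintro ⟨p, rfl⟩; exact family_isMaxLinked p, fun hF => ?_⟩
  classical
  let S := univ.filter fun g => (({g} : Finset Klein) : Set Klein) ∈ F.1
  let P := univ.filter fun x => (({1, x} : Finset Klein) : Set Klein) ∈ F.1
  have hW : ∀ t ∈ witnesses S P, (t : Set Klein) ∈ F.1 := by
    intro t ht
    rcases mem_union.mp ht with ht | ht <;> obtain ⟨_, -, rfl⟩ := mem_image.mp ht <;>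
      exact hF.coe_ite_mem _ (by simp [S, P])
  obtain ⟨p, hp⟩ := exists_gens_subset_witnesses S P fun s hs t ht hst =>
    Set.not_disjoint_iff_nonempty_inter.mpr (hF.1 _ (hW s hs) _ (hW t ht))
      (Finset.disjoint_coe.mpr hst)
  refine ⟨p, family_eq_of_gens_mem hF.1 p fun s hs => ?_⟩
  obtain ⟨t, ht, hts⟩ := hp s hs
  exact F.2.2.2 _ (hW t ht) _ (Finset.coe_subset.mpr hts)

end Klein

/-- Proposition 4.1(4): `λ(C₂ × C₂) ≅ (C₂ ⊔ L₁) × C₂ × C₂`. -/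
theorem superextension_C2xC2 :
    MulIsoOnto ((OSum (Cgrp 2) (L 1)) × Cgrp 2 × Cgrp 2) (lambdaS (Cgrp 2 × Cgrp 2)) :=
  ⟨Klein.family, Klein.family_injective, Klein.range_family, Klein.family_mul⟩
end
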